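/- Let G be a positive definite Hermitian M×M complex matrix, let W ∈ ℂ^{M×M} be invertible, and fix k with 1 ≤ k ≤ M. For w ∈ ℂ^M, let W_k(w) denote the matrix W with its k-th column replaced by w, and consider f(w) = w^H G w − 2 log|det W_k(w)| on the set of w for which W_k(w) is invertible. Then u = (W^H G)^{−1} e_k is nonzero, and the vector w* = u (u^H G u)^{−1/2} makes W_k(w*) invertible and globally minimizes f over all w with W_k(w) invertible. -/

import Mathlib

/- Here `M ≥ 1` and matrices are indexed by `Fin M`; `k : Fin M`.
`W_k(w)` is `W.updateColumn k w`, and for the positive real `uᴴ G u`, its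
`−1/2` power is `(Real.sqrt (uᴴ G u).re)⁻¹`. -/

open Matrix
open scoped ComplexOrder

/-- `f(w) = wᴴ G w − 2 log|det W_k(w)|`. -/
noncomputable def fCost {M : ℕ} (G : Matrix (Fin M) (Fin M) ℂ)
    (W : Matrix (Fin M) (Fin M) ℂ) (k : Fin M) (w : Fin M → ℂ) : ℝ :=
  (star w ⬝ᵥ (G *ᵥ w)).re - 2 * Real.log ‖(W.updateCol k w).det‖

/-! Since `(Wᴴ G) u = e_k`, we have `uᴴ G w = (W⁻¹ w)_k`, so Cramer's rule gives
`det W_k(w) = det W · uᴴ G w`. With `s = uᴴ G u` and `t = wᴴ G w`, Cauchy–Schwarz for the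
inner product defined by `G` gives `|uᴴ G w|² ≤ s t`, hence, using `log t ≤ t − 1`,
`f(w) ≥ t − log t − log s − 2 log |det W| ≥ 1 − log s − 2 log |det W| = f(w*)`. -/

namespace Matrix

variable {n : Type*} [Fintype n]

section CommRing

variable [DecidableEq n] {R : Type*} [CommRing R]

theorem det_updateCol_eq_det_mul_inv_mulVec_apply {A : Matrix n n R} (hA : IsUnit A.det) (k : n)
    (w : n → R) :
    (A.updateCol k w).det = A.det * (A⁻¹ *ᵥ w) k := by
  rw [← cramer_apply, ← det_smul_inv_mulVec_eq_cramer _ _ hA, Pi.smul_apply, smul_eq_mul]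

variable [StarRing R]

theorem IsHermitian.star_dotProduct_mulVec_eq_inv_mulVec_apply {G W : Matrix n n R}
    (hG : G.IsHermitian) (hW : IsUnit W.det) {k : n} {u : n → R}
    (hu : (Wᴴ * G) *ᵥ u = Pi.single k 1) (w : n → R) :
    star u ⬝ᵥ (G *ᵥ w) = (W⁻¹ *ᵥ w) k :=
  calc star u ⬝ᵥ (G *ᵥ w) = star u ⬝ᵥ ((G * W) *ᵥ (W⁻¹ *ᵥ w)) := by
        rw [mulVec_mulVec, Matrix.mul_assoc, mul_nonsing_inv _ hW, Matrix.mul_one]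
    _ = star ((Wᴴ * G) *ᵥ u) ⬝ᵥ (W⁻¹ *ᵥ w) := by
        rw [dotProduct_mulVec, star_mulVec, conjTranspose_mul, conjTranspose_conjTranspose,
          hG.eq]
    _ = (W⁻¹ *ᵥ w) k := by
        rw [hu, Pi.star_single, star_one, single_one_dotProduct]

theorem IsHermitian.det_updateCol_eq_det_mul_star_dotProduct_mulVec
    {G W : Matrix n n R} (hG : G.IsHermitian) (hW : IsUnit W.det) {k : n} {u : n → R}
    (hu : (Wᴴ * G) *ᵥ u = Pi.single k 1) (w : n → R) :
    (W.updateCol k w).det = W.det * (star u ⬝ᵥ (G *ᵥ w)) := by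
  rw [hG.star_dotProduct_mulVec_eq_inv_mulVec_apply hW hu,
    det_updateCol_eq_det_mul_inv_mulVec_apply hW]

end CommRing

variable {𝕜 : Type*} [RCLike 𝕜]

theorem PosSemidef.norm_star_dotProduct_mulVec_sq_le {G : Matrix n n 𝕜} (hG : G.PosSemidef)
    (x y : n → 𝕜) :
    ‖star x ⬝ᵥ (G *ᵥ y)‖ ^ 2 ≤
      RCLike.re (star x ⬝ᵥ (G *ᵥ x)) * RCLike.re (star y ⬝ᵥ (G *ᵥ y)) := by
  let _ := G.toSeminormedAddCommGroup hG
  let _ := G.toInnerProductSpace hG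
  have h := inner_mul_inner_self_le (𝕜 := 𝕜) x y
  rw [norm_inner_symm y x, ← sq] at h
  simp only [dotProduct_comm (star _)]
  exact h

theorem IsHermitian.star_dotProduct_mulVec_smul_inv_sqrt {G : Matrix n n 𝕜} (hG : G.IsHermitian)
    {u : n → 𝕜} {s : ℝ} (hus : RCLike.re (star u ⬝ᵥ (G *ᵥ u)) = s) (hs : 0 < s) :
    star u ⬝ᵥ (G *ᵥ ((((√s)⁻¹ : ℝ) : 𝕜) • u)) = (√s : 𝕜) ∧
      RCLike.re (star ((((√s)⁻¹ : ℝ) : 𝕜) • u) ⬝ᵥ (G *ᵥ ((((√s)⁻¹ : ℝ) : 𝕜) • u))) = 1 := by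
  have hus' : star u ⬝ᵥ (G *ᵥ u) = (s : 𝕜) := by
    rw [← RCLike.re_add_im (star u ⬝ᵥ (G *ᵥ u)), hG.im_star_dotProduct_mulVec_self, hus]
    simp
  have hsqrt : √s ^ 2 = s := Real.sq_sqrt hs.le
  have hsqrt0 : √s ≠ 0 := (Real.sqrt_pos.2 hs).ne'
  constructor
  · rw [mulVec_smul, dotProduct_smul, hus', smul_eq_mul, ← RCLike.ofReal_mul]
    congr 1
    field_simp
    exact hsqrt.symm
  · rw [star_smul, smul_dotProduct, mulVec_smul, dotProduct_smul, hus', RCLike.star_def,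
      RCLike.conj_ofReal, smul_eq_mul, smul_eq_mul, ← RCLike.ofReal_mul, ← RCLike.ofReal_mul,
      RCLike.ofReal_re]
    field_simp
    exact hsqrt.symm

end Matrix

theorem Real.one_sub_log_le_sub_two_mul_log_of_sq_le {r s t : ℝ} (hs : 0 < s) (hr : 0 < r)
    (h : r ^ 2 ≤ s * t) : 1 - Real.log s ≤ t - 2 * Real.log r := by
  have ht : 0 < t := pos_of_mul_pos_right ((pow_pos hr 2).trans_le h) hs.le
  have hlog := Real.log_le_log (pow_pos hr 2) h
  rw [Real.log_pow, Real.log_mul hs.ne' ht.ne', Nat.cast_ofNat] at hlog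
  linarith [Real.log_le_sub_one_of_pos ht]

theorem fCost_eq_of_det_updateCol_eq {M : ℕ} (G W : Matrix (Fin M) (Fin M) ℂ) (k : Fin M)
    {w : Fin M → ℂ} {c : ℂ} (h : (W.updateCol k w).det = W.det * c) (hW : W.det ≠ 0)
    (hc : c ≠ 0) :
    fCost G W k w = (star w ⬝ᵥ (G *ᵥ w)).re - 2 * Real.log ‖W.det‖ - 2 * Real.log ‖c‖ := by
  rw [fCost, h, norm_mul, Real.log_mul (norm_ne_zero_iff.2 hW) (norm_ne_zero_iff.2 hc)]
  ring

theorem ip_update_global_min_general (M : ℕ)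
    (G : Matrix (Fin M) (Fin M) ℂ) (hG : G.PosDef)
    (W : Matrix (Fin M) (Fin M) ℂ) (hW : IsUnit W.det) (k : Fin M)
    (u : Fin M → ℂ) (hu : u = (Wᴴ * G)⁻¹ *ᵥ Pi.single k 1) :
    u ≠ 0 ∧
    ∀ ws : Fin M → ℂ,
      ws = (((Real.sqrt ((star u ⬝ᵥ (G *ᵥ u)).re))⁻¹ : ℝ) : ℂ) • u →
      IsUnit (W.updateCol k ws).det ∧
      ∀ w : Fin M → ℂ, IsUnit (W.updateCol k w).det →
        fCost G W k ws ≤ fCost G W k w := by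
  have hWG : IsUnit (Wᴴ * G).det := by
    rw [det_mul, det_conjTranspose]
    exact hW.star.mul ((isUnit_iff_isUnit_det G).1 hG.isUnit)
  have hdual : (Wᴴ * G) *ᵥ u = Pi.single k 1 := by
    rw [hu, mulVec_mulVec, mul_nonsing_inv _ hWG, one_mulVec]
  have hdet := hG.isHermitian.det_updateCol_eq_det_mul_star_dotProduct_mulVec hW hdual
  have hu0 : u ≠ 0 := by
    rintro rfl
    simpa using congrFun hdual k
  set s := (star u ⬝ᵥ (G *ᵥ u)).re
  have hs : 0 < s := hG.re_dotProduct_pos hu0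
  refine ⟨hu0, fun ws hws => ?_⟩
  obtain ⟨hc_ws, hq_ws⟩ :
      star u ⬝ᵥ (G *ᵥ ws) = (√s : ℂ) ∧ (star ws ⬝ᵥ (G *ᵥ ws)).re = 1 := by
    subst hws
    exact hG.isHermitian.star_dotProduct_mulVec_smul_inv_sqrt rfl hs
  have hdet_ws : (W.updateCol k ws).det = W.det * √s := by rw [hdet, hc_ws]
  have hsqrt : (√s : ℂ) ≠ 0 := Complex.ofReal_ne_zero.2 (Real.sqrt_pos.2 hs).ne'
  refine ⟨hdet_ws ▸ hW.mul hsqrt.isUnit, fun w hw => ?_⟩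
  have hc : star u ⬝ᵥ (G *ᵥ w) ≠ 0 := right_ne_zero_of_mul (hdet w ▸ hw.ne_zero)
  have hCS : ‖star u ⬝ᵥ (G *ᵥ w)‖ ^ 2 ≤ s * (star w ⬝ᵥ (G *ᵥ w)).re :=
    hG.posSemidef.norm_star_dotProduct_mulVec_sq_le u w
  rw [fCost_eq_of_det_updateCol_eq G W k hdet_ws hW.ne_zero hsqrt,
    fCost_eq_of_det_updateCol_eq G W k (hdet w) hW.ne_zero hc, hq_ws, Complex.norm_real,
    Real.norm_of_nonneg (Real.sqrt_nonneg s), Real.log_sqrt hs.le]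
  linarith [Real.one_sub_log_le_sub_two_mul_log_of_sq_le hs (norm_pos_iff.2 hc) hCS]

/-- `u = (Wᴴ G)⁻¹ e_k` is nonzero, and `w* = u (uᴴ G u)^{−1/2}` makes `W_k(w*)`
invertible and globally minimizes `f(w) = wᴴ G w − 2 log|det W_k(w)|` over all
`w` with `W_k(w)` invertible. -/
theorem ip_update_global_min (M : ℕ) (hM : 1 ≤ M)
    (G : Matrix (Fin M) (Fin M) ℂ) (hG : G.PosDef)
    (W : Matrix (Fin M) (Fin M) ℂ) (hW : IsUnit W.det) (k : Fin M)
    (u : Fin M → ℂ) (hu : u = (Wᴴ * G)⁻¹ *ᵥ Pi.single k 1) :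
    u ≠ 0 ∧
    ∀ ws : Fin M → ℂ,
      ws = (((Real.sqrt ((star u ⬝ᵥ (G *ᵥ u)).re))⁻¹ : ℝ) : ℂ) • u →
      IsUnit (W.updateCol k ws).det ∧
      ∀ w : Fin M → ℂ, IsUnit (W.updateCol k w).det →
        fCost G W k ws ≤ fCost G W k w :=
  ip_update_global_min_general M G hG W hW k u hu
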